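/- arXiv:1107.2214 — 3 statements merged into one kernel-verified Lean document; each statement's English description precedes it below -/
import Mathlib

section
/- In this setup, the set T of triple points of the arrangement 𝒜 decomposes as T = T₀ ∪ T₁ ∪ T₂ ∪ T₃, the four sets T₀, T₁, T₂, T₃ are pairwise disjoint, and the base point set T₀ consists of exactly m² points. -/
open MvPolynomial Finset

noncomputable section

/-- `S = ℂ[x,y,z]`, the polynomial ring in three variables over `ℂ`. -/
abbrev MvP : Type := MvPolynomial (Fin 3) ℂ

/-- The complex projective plane `ℙ²(ℂ)`. -/
abbrev P2 : Type := Projectivization ℂ (Fin 3 → ℂ)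

/-- Evaluation of a polynomial at the chosen representative of a projective point. -/
def pev (h : MvP) (t : P2) : ℂ := eval t.rep h

/-- `PencilSetup m L` : the `L i j` (`i : Fin 3`, `j : Fin m`) are the linear forms of a
line arrangement `𝒜` of `3*m` lines in `ℙ²(ℂ)` (with `2 ≤ m`), grouped into three
subarrangements `𝒜ᵢ : Qᵢ = 0` where `Qᵢ = ∏ⱼ L i j` and `Q₁ + Q₂ = Q₃`
(so `𝒜` is composed of a reduced pencil), the `3*m` linear forms being pairwise
non-proportional, and no point of `ℙ²(ℂ)` lying on four or more of the `3*m` lines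
(`𝒜` has only double and triple points). -/
def PencilSetup (m : ℕ) (L : Fin 3 → Fin m → MvP) : Prop :=
  2 ≤ m ∧
  (∀ i j, (L i j).IsHomogeneous 1 ∧ L i j ≠ 0) ∧
  ((∏ j, L 0 j) + (∏ j, L 1 j) = ∏ j, L 2 j) ∧
  (∀ (i j i' j'), (i, j) ≠ (i', j') → ∀ c : ℂ, L i j ≠ c • L i' j') ∧
  (∀ t : P2, {p : Fin 3 × Fin m | pev (L p.1 p.2) t = 0}.ncard ≤ 3)

/-- The defining equation `Qᵢ₊₁` of the subarrangement `𝒜ᵢ₊₁`. -/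
def Qpoly {m : ℕ} (L : Fin 3 → Fin m → MvP) (i : Fin 3) : MvP := ∏ j, L i j

/-- `T₀`, the base point set of the pencil, i.e. the common zeros of `Q₁` and `Q₂`. -/
def T0set {m : ℕ} (L : Fin 3 → Fin m → MvP) : Set P2 :=
  {t | pev (Qpoly L 0) t = 0 ∧ pev (Qpoly L 1) t = 0}

/-- `Tᵢ₊₁`, the set of points lying on exactly three lines of the subarrangement `𝒜ᵢ₊₁`. -/
def Tsub {m : ℕ} (L : Fin 3 → Fin m → MvP) (i : Fin 3) : Set P2 :=
  {t | {j : Fin m | pev (L i j) t = 0}.ncard = 3}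

/-- `T`, the set of points lying on exactly three of the `3*m` lines of `𝒜`. -/
def Tall {m : ℕ} (L : Fin 3 → Fin m → MvP) : Set P2 :=
  {t | {p : Fin 3 × Fin m | pev (L p.1 p.2) t = 0}.ncard = 3}

/-!
Let `nᵢ(t)` be the number of lines of `𝒜ᵢ` through a point `t`, so that `n₁ + n₂ + n₃ ≤ 3`.
Since `Q₃ = Q₁ + Q₂`, a point on two of the curves `Qᵢ = 0` lies on the third: either all
`nᵢ(t)` are positive, which happens exactly for `t ∈ T₀` and forces `n₁ = n₂ = n₃ = 1`, or at
most one of them is. The decomposition and the disjointness follow by counting. Since a base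
point lies on exactly one line of `𝒜₁` and one of `𝒜₂`, the map sending `(j, k)` to the meeting
point of the `j`-th line of `𝒜₁` and the `k`-th line of `𝒜₂` (the cross product of their
coefficient vectors) is a bijection from pairs onto `T₀`.
-/

open Matrix
open scoped LinearAlgebra.Projectivization

theorem MvPolynomial.IsHomogeneous.exists_eq_sum_smul_X {σ R : Type*} [Fintype σ]
    [CommSemiring R] {p : MvPolynomial σ R} (hp : p.IsHomogeneous 1) :
    ∃ a : σ → R, ∑ i, a i • X i = p := by
  have hmem : p ∈ homogeneousSubmodule σ R 1 := hp
  rwa [homogeneousSubmodule_one_eq_span_X, Submodule.mem_span_range_iff_exists_fun] at hmem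

theorem MvPolynomial.eval_sum_smul_X {σ R : Type*} [Fintype σ] [CommSemiring R]
    (a v : σ → R) : eval v (∑ i, a i • X i) = a ⬝ᵥ v := by
  simp [dotProduct]

theorem MvPolynomial.crossProduct_ne_zero_of_sum_smul_X {K : Type*} [Field K]
    {a b : Fin 3 → K} (ha : ∑ i, a i • X i ≠ (0 : MvPolynomial (Fin 3) K))
    (hab : ∀ c : K, ∑ i, b i • X i ≠ (c • ∑ i, a i • X i : MvPolynomial (Fin 3) K)) :
    a ⨯₃ b ≠ 0 := by
  rw [crossProduct_ne_zero_iff_linearIndependent,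
    LinearIndependent.pair_iff' (by rintro rfl; simp at ha)]
  rintro c rfl
  exact hab c (by simp [Finset.smul_sum, smul_smul])

theorem Projectivization.eq_mk_crossProduct_iff {K : Type*} [Field K] {a b : Fin 3 → K}
    (h : a ⨯₃ b ≠ 0) (t : ℙ K (Fin 3 → K)) :
    t = mk K (a ⨯₃ b) h ↔ a ⬝ᵥ t.rep = 0 ∧ b ⬝ᵥ t.rep = 0 := by
  conv_lhs => rw [← t.mk_rep, mk_eq_mk_iff']
  constructor
  · rintro ⟨c, hc⟩
    simp [← hc, dotProduct_smul, dot_self_cross, dot_cross_self]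
  · rintro ⟨ha, hb⟩
    have hcross : a ⨯₃ b ⨯₃ t.rep = 0 := by
      simp [cross_cross_eq_smul_sub_smul, ha, hb]
    have hdep : ¬ LinearIndependent K ![a ⨯₃ b, t.rep] := by
      rw [← crossProduct_ne_zero_iff_linearIndependent, not_not]; exact hcross
    simpa [LinearIndependent.pair_iff' h] using hdep

theorem Set.ncard_setOf_prod_eq_sum {α β : Type*} [Fintype α] [Fintype β]
    (P : α → β → Prop) : {p : α × β | P p.1 p.2}.ncard = ∑ a, {b | P a b}.ncard := by
  classical
  simp only [Set.ncard_eq_toFinset_card', Set.toFinset_ofPred, Finset.card_filter,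
    Fintype.sum_prod_type]

def lineCount {m : ℕ} (L : Fin 3 → Fin m → MvP) (i : Fin 3) (t : P2) : ℕ :=
  {j : Fin m | pev (L i j) t = 0}.ncard

section Incidence

variable {m : ℕ} {L : Fin 3 → Fin m → MvP} {t : P2}

theorem ncard_incidences_eq_sum_lineCount :
    {p : Fin 3 × Fin m | pev (L p.1 p.2) t = 0}.ncard = ∑ i, lineCount L i t :=
  Set.ncard_setOf_prod_eq_sum (fun i j => pev (L i j) t = 0)

theorem mem_Tall_iff : t ∈ Tall L ↔ ∑ i, lineCount L i t = 3 := by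
  rw [← ncard_incidences_eq_sum_lineCount]; rfl

theorem mem_Tsub_iff {i : Fin 3} : t ∈ Tsub L i ↔ lineCount L i t = 3 := Iff.rfl

theorem lineCount_pos_iff {i : Fin 3} : 0 < lineCount L i t ↔ ∃ j, pev (L i j) t = 0 :=
  Set.ncard_pos (Set.toFinite _)

theorem pev_Qpoly_eq_zero_iff {i : Fin 3} : pev (Qpoly L i) t = 0 ↔ ∃ j, pev (L i j) t = 0 := by
  simp [Qpoly, pev, Finset.prod_eq_zero_iff]

theorem mem_T0set_iff :
    t ∈ T0set L ↔ (∃ j, pev (L 0 j) t = 0) ∧ ∃ k, pev (L 1 k) t = 0 :=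
  pev_Qpoly_eq_zero_iff.and pev_Qpoly_eq_zero_iff

theorem eq_of_lineCount_eq_one {i : Fin 3} {j j' : Fin m} (h : lineCount L i t = 1)
    (hj : pev (L i j) t = 0) (hj' : pev (L i j') t = 0) : j = j' :=
  (Set.ncard_le_one (Set.toFinite _)).mp h.le j hj j' hj'

end Incidence

namespace PencilSetup

variable {m : ℕ} {L : Fin 3 → Fin m → MvP}

theorem sum_lineCount_le (h : PencilSetup m L) (t : P2) : ∑ i, lineCount L i t ≤ 3 := by
  rw [← ncard_incidences_eq_sum_lineCount]
  exact h.2.2.2.2 t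

theorem lineCount_pos_of_two_pos (h : PencilSetup m L) (t : P2) :
    (0 < lineCount L 0 t → 0 < lineCount L 1 t → 0 < lineCount L 2 t) ∧
    (0 < lineCount L 0 t → 0 < lineCount L 2 t → 0 < lineCount L 1 t) ∧
    (0 < lineCount L 1 t → 0 < lineCount L 2 t → 0 < lineCount L 0 t) := by
  have hpencil : pev (Qpoly L 2) t = pev (Qpoly L 0) t + pev (Qpoly L 1) t := by
    simp only [pev, Qpoly, ← h.2.2.1, map_add]
  simp only [lineCount_pos_iff, ← pev_Qpoly_eq_zero_iff, hpencil]
  refine ⟨fun h0 h1 => by rw [h0, h1, add_zero], fun h0 h2 => ?_, fun h1 h2 => ?_⟩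
  · rwa [h0, zero_add] at h2
  · rwa [h1, add_zero] at h2

theorem lineCount_eq_one_of_mem_T0set (h : PencilSetup m L) {t : P2} (ht : t ∈ T0set L)
    (i : Fin 3) : lineCount L i t = 1 := by
  rw [mem_T0set_iff, ← lineCount_pos_iff, ← lineCount_pos_iff] at ht
  have hle := h.sum_lineCount_le t
  have hpos := h.lineCount_pos_of_two_pos t
  rw [Fin.sum_univ_three] at hle
  fin_cases i <;> simp only [Fin.zero_eta, Fin.mk_one, Fin.reduceFinMk] <;> omega

theorem ncard_T0set (h : PencilSetup m L) : (T0set L).ncard = m ^ 2 := by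
  have ⟨_, hL, _, hnp, _⟩ := h
  choose a ha using fun i j => (hL i j).1.exists_eq_sum_smul_X
  have hpev : ∀ i j t, pev (L i j) t = a i j ⬝ᵥ t.rep := fun i j t => by
    rw [pev, ← ha, eval_sum_smul_X]
  have hcross : ∀ j k, a 0 j ⨯₃ a 1 k ≠ 0 := fun j k =>
    crossProduct_ne_zero_of_sum_smul_X (by rw [ha]; exact (hL 0 j).2)
      (by simpa only [ha] using hnp 1 k 0 j (by simp))
  let F : Fin m × Fin m → P2 := fun q => .mk ℂ (a 0 q.1 ⨯₃ a 1 q.2) (hcross q.1 q.2)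
  have hF : ∀ q t, t = F q ↔ pev (L 0 q.1) t = 0 ∧ pev (L 1 q.2) t = 0 := fun q t => by
    simp only [hpev]; exact Projectivization.eq_mk_crossProduct_iff _ t
  have hrange : Set.range F = T0set L := by
    ext t
    simp only [Set.mem_range, eq_comm (b := t), hF, Prod.exists, mem_T0set_iff,
      exists_and_left, exists_and_right]
  have hinj : F.Injective := fun q q' hqq' => by
    have ht : F q ∈ T0set L := hrange ▸ Set.mem_range_self q
    obtain ⟨hj, hk⟩ := (hF q (F q)).mp rfl
    obtain ⟨hj', hk'⟩ := (hF q' (F q)).mp hqq'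
    exact Prod.ext (eq_of_lineCount_eq_one (h.lineCount_eq_one_of_mem_T0set ht 0) hj hj')
      (eq_of_lineCount_eq_one (h.lineCount_eq_one_of_mem_T0set ht 1) hk hk')
  rw [← hrange, Set.ncard_range_of_injective hinj, Nat.card_eq_fintype_card,
    Fintype.card_prod, Fintype.card_fin, sq]

end PencilSetup

/-- The set `T` of triple points of `𝒜` decomposes as
`T = T₀ ∪ T₁ ∪ T₂ ∪ T₃`, the four sets `T₀, T₁, T₂, T₃` are pairwise disjoint, and the
base point set `T₀` consists of exactly `m²` points. -/
theorem triple_points_decomposition (m : ℕ) (L : Fin 3 → Fin m → MvP)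
    (h : PencilSetup m L) :
    Tall L = T0set L ∪ Tsub L 0 ∪ Tsub L 1 ∪ Tsub L 2 ∧
    (∀ i : Fin 3, Disjoint (T0set L) (Tsub L i)) ∧
    (∀ i j : Fin 3, i ≠ j → Disjoint (Tsub L i) (Tsub L j)) ∧
    (T0set L).ncard = m ^ 2 := by
  refine ⟨?_, fun i => ?_, fun i j hij => ?_, h.ncard_T0set⟩
  · ext t
    have hle := h.sum_lineCount_le t
    have hpos := h.lineCount_pos_of_two_pos t
    simp only [Set.mem_union, mem_Tall_iff, mem_T0set_iff, mem_Tsub_iff, ← lineCount_pos_iff,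
      Fin.sum_univ_three] at hle ⊢
    omega
  · refine Set.disjoint_left.mpr fun t ht hti => ?_
    rw [mem_Tsub_iff, h.lineCount_eq_one_of_mem_T0set ht] at hti
    omega
  · refine Set.disjoint_left.mpr fun t hti htj => ?_
    have hpair : lineCount L i t + lineCount L j t ≤ ∑ k, lineCount L k t :=
      (Finset.sum_pair (f := (lineCount L · t)) hij).symm.trans_le
        (Finset.sum_le_sum_of_subset (Finset.subset_univ _))
    have hle := h.sum_lineCount_le t
    rw [mem_Tsub_iff] at hti htj
    omega
end
end

section
/- In this setup, let h = h₁Q₁ + h₂Q₂ with h₁, h₂ ∈ S_{m−3}. Then h vanishes at (a representative of) every point of T = T₀ ∪ T₁ ∪ T₂ ∪ T₃ if and only if h₁ vanishes at every point of T₂, h₂ vanishes at every point of T₁, and h₁ − h₂ vanishes at every point of T₃. -/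
/-!
At a base point of the pencil both `Q₁` and `Q₂` vanish, so `h` does. A point of `Tᵢ` lies on
three lines of `𝒜ᵢ`; since no point lies on four lines of `𝒜`, it lies on no line of the other two
subarrangements, so `Qᵢ` is the only one of `Q₁, Q₂, Q₃` vanishing there. Hence at a point of
`T₁` (resp. `T₂`) the value of `h` is `h₂Q₂` (resp. `h₁Q₁`) with `Q₂ ≠ 0` (resp. `Q₁ ≠ 0`), and
at a point of `T₃` it is `(h₁ - h₂)Q₁` with `Q₁ ≠ 0`, because `Q₂ = -Q₁` there.
-/

open MvPolynomial Finset

noncomputable section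

/-- `S_d`, the space of homogeneous polynomials of degree `d`, for an integer `d`
(with `S_d = 0` for `d < 0`). -/
def SZ (d : ℤ) : Submodule ℂ MvP :=
  if 0 ≤ d then homogeneousSubmodule (Fin 3) ℂ d.toNat else ⊥

@[simp]
lemma pev_add (f g : MvP) (t : P2) : pev (f + g) t = pev f t + pev g t := by
  simp [pev]

@[simp]
lemma pev_sub (f g : MvP) (t : P2) : pev (f - g) t = pev f t - pev g t := by
  simp [pev]

@[simp]
lemma pev_mul (f g : MvP) (t : P2) : pev (f * g) t = pev f t * pev g t := by
  simp [pev]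

lemma pev_Qpoly {m : ℕ} (L : Fin 3 → Fin m → MvP) (i : Fin 3) (t : P2) :
    pev (Qpoly L i) t = ∏ j, pev (L i j) t := by
  simp [pev, Qpoly]

section Tsub

variable {m : ℕ} {L : Fin 3 → Fin m → MvP} {i : Fin 3} {t : P2}

lemma pev_Qpoly_eq_zero_of_mem_Tsub (ht : t ∈ Tsub L i) : pev (Qpoly L i) t = 0 := by
  obtain ⟨j, hj⟩ : {j : Fin m | pev (L i j) t = 0}.Nonempty :=
    Set.nonempty_of_ncard_ne_zero (by rw [show _ = 3 from ht]; norm_num)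
  rw [pev_Qpoly]
  exact prod_eq_zero (mem_univ j) hj

lemma pev_Qpoly_ne_zero_of_mem_Tsub
    (hL : ∀ t : P2, {p : Fin 3 × Fin m | pev (L p.1 p.2) t = 0}.ncard ≤ 3)
    {i' : Fin 3} (hi : i' ≠ i) (ht : t ∈ Tsub L i) : pev (Qpoly L i') t ≠ 0 := by
  intro h0
  obtain ⟨j', -, hj'⟩ := prod_eq_zero_iff.mp ((pev_Qpoly L i' t).symm.trans h0)
  have hcard : ((Prod.mk i) '' {j : Fin m | pev (L i j) t = 0}).ncard = 3 := by
    rw [Set.ncard_image_of_injective _ (Prod.mk_right_injective i)]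
    exact ht
  have hssub : (Prod.mk i) '' {j : Fin m | pev (L i j) t = 0} ⊂
      {p : Fin 3 × Fin m | pev (L p.1 p.2) t = 0} := by
    refine (Set.ssubset_iff_of_subset ?_).mpr ⟨(i', j'), hj', ?_⟩
    · rintro _ ⟨j, hj, rfl⟩
      exact hj
    · rintro ⟨j, -, hj⟩
      exact hi (congrArg Prod.fst hj).symm
  have := Set.ncard_lt_ncard hssub (Set.toFinite _)
  have := hL t
  omega

end Tsub

section Vanishing

variable {m : ℕ} {L : Fin 3 → Fin m → MvP} {t : P2} (h₁ h₂ : MvP)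

lemma pev_eq_zero_of_mem_T0set (ht : t ∈ T0set L) :
    pev (h₁ * Qpoly L 0 + h₂ * Qpoly L 1) t = 0 := by
  simp [ht.1, ht.2]

lemma pev_eq_zero_iff_of_mem_Tsub_zero
    (hL : ∀ t : P2, {p : Fin 3 × Fin m | pev (L p.1 p.2) t = 0}.ncard ≤ 3)
    (ht : t ∈ Tsub L 0) :
    pev (h₁ * Qpoly L 0 + h₂ * Qpoly L 1) t = 0 ↔ pev h₂ t = 0 := by
  simp [pev_Qpoly_eq_zero_of_mem_Tsub ht,
    pev_Qpoly_ne_zero_of_mem_Tsub hL (show (1 : Fin 3) ≠ 0 by decide) ht]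

lemma pev_eq_zero_iff_of_mem_Tsub_one
    (hL : ∀ t : P2, {p : Fin 3 × Fin m | pev (L p.1 p.2) t = 0}.ncard ≤ 3)
    (ht : t ∈ Tsub L 1) :
    pev (h₁ * Qpoly L 0 + h₂ * Qpoly L 1) t = 0 ↔ pev h₁ t = 0 := by
  simp [pev_Qpoly_eq_zero_of_mem_Tsub ht,
    pev_Qpoly_ne_zero_of_mem_Tsub hL (show (0 : Fin 3) ≠ 1 by decide) ht]

lemma pev_eq_zero_iff_of_mem_Tsub_two
    (hL : ∀ t : P2, {p : Fin 3 × Fin m | pev (L p.1 p.2) t = 0}.ncard ≤ 3)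
    (hQ : Qpoly L 0 + Qpoly L 1 = Qpoly L 2) (ht : t ∈ Tsub L 2) :
    pev (h₁ * Qpoly L 0 + h₂ * Qpoly L 1) t = 0 ↔ pev (h₁ - h₂) t = 0 := by
  have hQ₁ : pev (Qpoly L 1) t = -pev (Qpoly L 0) t := by
    rw [eq_neg_iff_add_eq_zero, add_comm, ← pev_add, hQ, pev_Qpoly_eq_zero_of_mem_Tsub ht]
  have hQ₀ := pev_Qpoly_ne_zero_of_mem_Tsub hL (show (0 : Fin 3) ≠ 2 by decide) ht
  rw [pev_add, pev_mul, pev_mul, hQ₁, pev_sub, mul_neg, ← sub_eq_add_neg, ← sub_mul]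
  exact mul_eq_zero_iff_right hQ₀

end Vanishing

theorem vanishing_on_T_iff_general (m : ℕ) (L : Fin 3 → Fin m → MvP) (h : PencilSetup m L)
    (h₁ h₂ : MvP) :
    (∀ t ∈ T0set L ∪ Tsub L 0 ∪ Tsub L 1 ∪ Tsub L 2,
        pev (h₁ * Qpoly L 0 + h₂ * Qpoly L 1) t = 0) ↔
      ((∀ t ∈ Tsub L 1, pev h₁ t = 0) ∧ (∀ t ∈ Tsub L 0, pev h₂ t = 0) ∧
        (∀ t ∈ Tsub L 2, pev (h₁ - h₂) t = 0)) := by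
  obtain ⟨-, -, hQ, -, hL⟩ := h
  simp only [Set.mem_union, or_imp, forall_and]
  rw [forall₂_congr fun t => pev_eq_zero_iff_of_mem_Tsub_zero (t := t) h₁ h₂ hL,
    forall₂_congr fun t => pev_eq_zero_iff_of_mem_Tsub_one (t := t) h₁ h₂ hL,
    forall₂_congr fun t => pev_eq_zero_iff_of_mem_Tsub_two (t := t) h₁ h₂ hL hQ]
  have hT0 : ∀ t ∈ T0set L, pev (h₁ * Qpoly L 0 + h₂ * Qpoly L 1) t = 0 :=
    fun _ => pev_eq_zero_of_mem_T0set h₁ h₂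
  tauto

/-- Let `h = h₁Q₁ + h₂Q₂` with `h₁, h₂ ∈ S_{m-3}`. Then `h` vanishes at
(a representative of) every point of `T = T₀ ∪ T₁ ∪ T₂ ∪ T₃` if and only if `h₁` vanishes
at every point of `T₂`, `h₂` vanishes at every point of `T₁`, and `h₁ - h₂` vanishes at
every point of `T₃`. -/
theorem vanishing_on_T_iff (m : ℕ) (L : Fin 3 → Fin m → MvP) (h : PencilSetup m L)
    (h₁ h₂ : MvP) (hh₁ : h₁ ∈ SZ ((m : ℤ) - 3)) (hh₂ : h₂ ∈ SZ ((m : ℤ) - 3)) :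
    (∀ t ∈ T0set L ∪ Tsub L 0 ∪ Tsub L 1 ∪ Tsub L 2,
        pev (h₁ * Qpoly L 0 + h₂ * Qpoly L 1) t = 0) ↔
      ((∀ t ∈ Tsub L 1, pev h₁ t = 0) ∧ (∀ t ∈ Tsub L 0, pev h₂ t = 0) ∧
        (∀ t ∈ Tsub L 2, pev (h₁ - h₂) t = 0)) :=
  vanishing_on_T_iff_general m L h h₁ h₂
end
end

section
/- An arrangement of 6 pairwise distinct lines in ℙ²(ℂ) in which no point lies on four or more of the lines has at most 4 triple points, i.e., at most 4 points lying on exactly three of the lines. (Consequently, in an 18-line arrangement with only double and triple points composed of a reduced pencil, the total number of triple points is at most 36 + 3·4 = 48.) -/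
/-!
A linear form is determined by its coefficient vector, and two non-proportional forms have
independent coefficient vectors, so two distinct lines meet in at most one point. Hence two
triple points share at most one line: the sets of lines through the triple points form a
family of `3`-subsets of the `6` lines, pairwise meeting in at most one element. Each line
then passes through at most `⌊5 / 2⌋ = 2` triple points, and double counting incidences
gives `3 · #triple points ≤ 6 · 2`.
-/

open MvPolynomial Finset

noncomputable section

namespace MvPolynomial

variable {σ R : Type*} [CommSemiring R] {φ ψ : MvPolynomial σ R}

def linearCoeffs (φ : MvPolynomial σ R) (k : σ) : R := coeff (Finsupp.single k 1) φ

@[simp]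
lemma linearCoeffs_smul (c : R) : (c • φ).linearCoeffs = c • φ.linearCoeffs := by
  ext k; simp [linearCoeffs]

variable [Fintype σ]

lemma IsHomogeneous.eq_sum_linearCoeffs (hφ : φ.IsHomogeneous 1) :
    φ = ∑ k, C (φ.linearCoeffs k) * X k := by
  classical
  ext d
  rw [coeff_sum]
  by_cases hd : d.degree = 1
  · obtain ⟨j, rfl⟩ : d ∈ Set.range fun k => Finsupp.single k 1 :=
      Finsupp.range_single_one ▸ hd
    simp [coeff_X, linearCoeffs, Finsupp.single_left_inj]
  · rw [hφ.coeff_eq_zero hd, Finset.sum_eq_zero fun k _ => ?_]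
    rw [coeff_C_mul, coeff_X, if_neg (by rintro rfl; simp at hd), mul_zero]

lemma IsHomogeneous.eval_eq_linearCoeffs_dotProduct (hφ : φ.IsHomogeneous 1) (v : σ → R) :
    eval v φ = φ.linearCoeffs ⬝ᵥ v := by
  conv_lhs => rw [hφ.eq_sum_linearCoeffs]
  simp [dotProduct]

lemma IsHomogeneous.eq_of_linearCoeffs_eq (hφ : φ.IsHomogeneous 1) (hψ : ψ.IsHomogeneous 1)
    (h : φ.linearCoeffs = ψ.linearCoeffs) : φ = ψ := by
  rw [hφ.eq_sum_linearCoeffs, hψ.eq_sum_linearCoeffs, h]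

lemma IsHomogeneous.linearCoeffs_ne_zero (hφ : φ.IsHomogeneous 1) (h0 : φ ≠ 0) :
    φ.linearCoeffs ≠ 0 := by
  intro h
  refine h0 (hφ.eq_of_linearCoeffs_eq (isHomogeneous_zero _ _ 1) ?_)
  rw [h]
  ext
  simp [linearCoeffs]

end MvPolynomial

open scoped LinearAlgebra.Projectivization

lemma MvPolynomial.IsHomogeneous.eq_of_eval_rep_eq_zero {K : Type*} [Field K]
    {φ ψ : MvPolynomial (Fin 3) K} (hφ : φ.IsHomogeneous 1) (hψ : ψ.IsHomogeneous 1)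
    (hψ0 : ψ ≠ 0) (hφψ : ∀ c : K, φ ≠ c • ψ) {s t : ℙ K (Fin 3 → K)}
    (hsφ : eval s.rep φ = 0) (hsψ : eval s.rep ψ = 0)
    (htφ : eval t.rep φ = 0) (htψ : eval t.rep ψ = 0) : s = t := by
  have hφ0 : φ ≠ 0 := by simpa using hφψ 0
  have ha := hφ.linearCoeffs_ne_zero hφ0
  have hb := hψ.linearCoeffs_ne_zero hψ0
  simp only [hφ.eval_eq_linearCoeffs_dotProduct, hψ.eval_eq_linearCoeffs_dotProduct]
    at hsφ hsψ htφ htψ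
  rcases Configuration.ofField.crossProduct_eq_zero_of_dotProduct_eq_zero hsφ hsψ htφ htψ
    with hab | hst
  · rw [← Projectivization.mk_eq_mk_iff_crossProduct_eq_zero ha hb,
      Projectivization.mk_eq_mk_iff] at hab
    obtain ⟨c, hc⟩ := hab
    have hcψ : ((c : K) • ψ).IsHomogeneous 1 := by simpa only [smul_eq_C_mul] using hψ.C_mul c
    refine (hφψ c (hφ.eq_of_linearCoeffs_eq hcψ ?_)).elim
    rw [linearCoeffs_smul, ← hc]
    rfl
  · rwa [← Projectivization.mk_eq_mk_iff_crossProduct_eq_zero s.rep_nonzero t.rep_nonzero,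
      Projectivization.mk_rep, Projectivization.mk_rep] at hst

namespace Finset

variable {α : Type*} [Fintype α] [DecidableEq α] {F : Finset (Finset α)}

lemma two_mul_card_filter_mem_le (h3 : ∀ s ∈ F, #s = 3)
    (hF : (F : Set (Finset α)).Pairwise fun s t => #(s ∩ t) ≤ 1) (a : α) :
    2 * #{s ∈ F | a ∈ s} ≤ Fintype.card α - 1 := by
  set G := {s ∈ F | a ∈ s}
  have hdisj : (G : Set (Finset α)).PairwiseDisjoint (·.erase a) := by
    intro s hs t ht hst
    simp only [G, coe_filter, Set.mem_ofPred_eq] at hs ht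
    refine disjoint_left.mpr fun b hbs hbt => ?_
    rw [mem_erase] at hbs hbt
    have hab : 1 < #(s ∩ t) := one_lt_card.mpr
      ⟨a, mem_inter.mpr ⟨hs.2, ht.2⟩, b, mem_inter.mpr ⟨hbs.2, hbt.2⟩, hbs.1.symm⟩
    exact (hF hs.1 ht.1 hst).not_gt hab
  calc 2 * #G = ∑ s ∈ G, #(s.erase a) := by
        rw [mul_comm, ← smul_eq_mul, ← sum_const]
        refine sum_congr rfl fun s hs => ?_
        simp only [G, mem_filter] at hs
        rw [card_erase_of_mem hs.2, h3 s hs.1]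
    _ = #(G.biUnion (·.erase a)) := (card_biUnion hdisj).symm
    _ ≤ #(univ.erase a) :=
      card_le_card (biUnion_subset.mpr fun s _ => erase_subset_erase a (subset_univ s))
    _ = Fintype.card α - 1 := card_erase_of_mem (mem_univ a)

lemma three_mul_card_le_of_pairwise_card_inter_le_one (h3 : ∀ s ∈ F, #s = 3)
    (hF : (F : Set (Finset α)).Pairwise fun s t => #(s ∩ t) ≤ 1) :
    3 * #F ≤ Fintype.card α * ((Fintype.card α - 1) / 2) :=
  calc 3 * #F = ∑ s ∈ F, #s := by rw [sum_congr rfl h3, sum_const, smul_eq_mul, mul_comm]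
    _ ≤ _ := sum_card_le fun a =>
      (Nat.le_div_iff_mul_le two_pos).mpr (by linarith [two_mul_card_filter_mem_le h3 hF a])

end Finset

theorem three_mul_ncard_setOf_ncard_eq_three_le {P ι : Type*} [Fintype ι] (I : P → ι → Prop)
    (hI : ∀ i j, i ≠ j → ∀ s t, I s i → I s j → I t i → I t j → s = t) :
    3 * {t | {i | I t i}.ncard = 3}.ncard ≤ Fintype.card ι * ((Fintype.card ι - 1) / 2) := by
  classical
  set S : P → Finset ι := fun t => {i | I t i}
  have hS (t : P) : {i | I t i}.ncard = #(S t) := by simp [S, ← Set.ncard_coe_finset]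
  simp_rw [hS]
  have heq (s t : P) (h : 1 < #(S s ∩ S t)) : s = t := by
    obtain ⟨i, hi, j, hj, hij⟩ := one_lt_card.mp h
    simp only [S, mem_inter, mem_filter, mem_univ, true_and] at hi hj
    exact hI i j hij s t hi.1 hj.1 hi.2 hj.2
  have hinj : Set.InjOn S {t | #(S t) = 3} := fun s hs t _ hst =>
    heq s t (by rw [← hst, inter_self, Set.mem_ofPred_eq.mp hs]; norm_num)
  rw [← hinj.ncard_image, Set.ncard_eq_toFinset_card _ (Set.toFinite _)]
  apply three_mul_card_le_of_pairwise_card_inter_le_one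
  · simp only [Set.Finite.mem_toFinset]
    rintro _ ⟨t, ht, rfl⟩
    exact ht
  · simp only [Set.Finite.coe_toFinset]
    rintro _ ⟨s, -, rfl⟩ _ ⟨t, -, rfl⟩ hst
    exact not_lt.mp fun h => hst (congrArg S (heq s t h))

theorem six_lines_at_most_four_triple_points_general (L : Fin 6 → MvP)
    (hhom : ∀ i, (L i).IsHomogeneous 1) (hne : ∀ i, L i ≠ 0)
    (hnp : ∀ i j : Fin 6, i ≠ j → ∀ c : ℂ, L i ≠ c • L j) :
    {t : P2 | {i : Fin 6 | pev (L i) t = 0}.ncard = 3}.ncard ≤ 4 := by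
  have h := three_mul_ncard_setOf_ncard_eq_three_le (fun t i => pev (L i) t = 0)
    fun i j hij _ _ => (hhom i).eq_of_eval_rep_eq_zero (hhom j) (hne j) (hnp i j hij)
  simp only [Fintype.card_fin] at h
  omega

/-- An arrangement of `6` pairwise distinct lines in `ℙ²(ℂ)` (given by
`6` pairwise non-proportional nonzero linear forms) in which no point lies on four or
more of the lines has at most `4` triple points, i.e. at most `4` points lying on exactly
three of the lines. -/
theorem six_lines_at_most_four_triple_points (L : Fin 6 → MvP)
    (hhom : ∀ i, (L i).IsHomogeneous 1) (hne : ∀ i, L i ≠ 0)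
    (hnp : ∀ i j : Fin 6, i ≠ j → ∀ c : ℂ, L i ≠ c • L j)
    (hd : ∀ t : P2, {i : Fin 6 | pev (L i) t = 0}.ncard ≤ 3) :
    {t : P2 | {i : Fin 6 | pev (L i) t = 0}.ncard = 3}.ncard ≤ 4 :=
  six_lines_at_most_four_triple_points_general L hhom hne hnp
end
end
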